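/- arXiv:2505.22565 — 9 statements merged into one kernel-verified Lean document; each statement's English description precedes it below -/
import Mathlib

section
/- Let A and B be subgroups of a finite group G and let N be a normal subgroup of G. Then |AN ∩ B : A ∩ B| ≤ |N : N ∩ A|, where AN denotes the subgroup generated by A and N (which equals the product set AN since N is normal). -/
namespace Subgroup

variable {G : Type*} [Group G]

-- Multiplied by `|H : H ∩ K| = |H ⊔ K : K|`, both sides become `|H ⊔ K : H ∩ K|`.
theorem relIndex_sup_right_eq_relIndex {H K : Subgroup G} [K.Normal] (hK : K.relIndex H ≠ 0) :
    H.relIndex (H ⊔ K) = H.relIndex K := by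
  have viaH := relIndex_mul_relIndex (H ⊓ K) H (H ⊔ K) inf_le_left le_sup_left
  have viaK := relIndex_mul_relIndex (H ⊓ K) K (H ⊔ K) inf_le_right le_sup_right
  rw [inf_relIndex_left] at viaH
  rw [inf_relIndex_right, relIndex_sup_right] at viaK
  exact Nat.eq_of_mul_eq_mul_left (Nat.pos_of_ne_zero hK)
    (viaH.trans (viaK.symm.trans (mul_comm _ _)))

theorem relIndex_inf_inf_le {H K : Subgroup G} (L : Subgroup G) (hHK : H ≤ K)
    (hH : H.relIndex K ≠ 0) : (H ⊓ L).relIndex (K ⊓ L) ≤ H.relIndex K := by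
  rw [← inf_of_le_left hHK, inf_assoc, inf_relIndex_right, inf_of_le_left hHK]
  exact relIndex_le_of_le_right inf_le_left hH

end Subgroup

theorem stmt2 {G : Type*} [Group G] [Finite G] (A B N : Subgroup G) [N.Normal] :
    (A ⊓ B).relIndex ((A ⊔ N) ⊓ B) ≤ (N ⊓ A).relIndex N :=
  calc (A ⊓ B).relIndex ((A ⊔ N) ⊓ B)
      ≤ A.relIndex (A ⊔ N) :=
        Subgroup.relIndex_inf_inf_le B le_sup_left Subgroup.index_ne_zero_of_finite
    _ = A.relIndex N := Subgroup.relIndex_sup_right_eq_relIndex Subgroup.index_ne_zero_of_finite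
    _ = (N ⊓ A).relIndex N := (Subgroup.inf_relIndex_left N A).symm
end

section
/- Let H1, H2, H3, H4 be subgroups of a finite group G. Then |H1| · |H2| · |H3 ∩ H4| · |H1 ∩ H2 ∩ H3 ∩ H4| ≥ |H1 ∩ H3| · |H1 ∩ H4| · |H2 ∩ H3| · |H2 ∩ H4|. -/
/-!
For subgroups `A, B` of a finite group `C` one has `|A| |B| ≤ |C| |A ∩ B|`, because
`[A : A ∩ B] ≤ [C : B]`. Applied inside `H1` and inside `H2` to the traces of `H3, H4`, this
bounds the right-hand side by `|H1| |H2| |H1 ∩ H3 ∩ H4| |H2 ∩ H3 ∩ H4|`; applied once more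
inside `H3 ∩ H4` to the traces of `H1, H2`, it bounds that by the left-hand side.
-/

namespace Subgroup

variable {G : Type*} [Group G]

theorem card_inf_mul_relIndex (H K : Subgroup G) :
    Nat.card (H ⊓ K : Subgroup G) * H.relIndex K = Nat.card K := by
  simpa only [relIndex_bot_left, inf_relIndex_right] using
    relIndex_mul_relIndex ⊥ (H ⊓ K) K bot_le inf_le_right

theorem card_inf_mul_card_inf_le (H K L : Subgroup G) [Finite L] :
    Nat.card (L ⊓ H : Subgroup G) * Nat.card (L ⊓ K : Subgroup G) ≤
      Nat.card L * Nat.card (L ⊓ H ⊓ K : Subgroup G) := by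
  have hrel : K.relIndex (L ⊓ H) ≤ K.relIndex L :=
    relIndex_le_of_le_right inf_le_left index_ne_zero_of_finite
  calc Nat.card (L ⊓ H : Subgroup G) * Nat.card (L ⊓ K : Subgroup G)
      = Nat.card (L ⊓ H ⊓ K : Subgroup G) * K.relIndex (L ⊓ H) *
          Nat.card (K ⊓ L : Subgroup G) := by
        rw [← card_inf_mul_relIndex K (L ⊓ H), inf_comm K, inf_comm L K]
    _ ≤ Nat.card (L ⊓ H ⊓ K : Subgroup G) * K.relIndex L * Nat.card (K ⊓ L : Subgroup G) := by
        gcongr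
    _ = Nat.card L * Nat.card (L ⊓ H ⊓ K : Subgroup G) := by
        rw [← card_inf_mul_relIndex K L]; ring

end Subgroup

theorem stmt4 {G : Type*} [Group G] [Finite G] (H1 H2 H3 H4 : Subgroup G) :
    Nat.card H1 * Nat.card H2 * Nat.card (H3 ⊓ H4 : Subgroup G) *
      Nat.card (H1 ⊓ H2 ⊓ H3 ⊓ H4 : Subgroup G) ≥
    Nat.card (H1 ⊓ H3 : Subgroup G) * Nat.card (H1 ⊓ H4 : Subgroup G) *
      Nat.card (H2 ⊓ H3 : Subgroup G) * Nat.card (H2 ⊓ H4 : Subgroup G) := by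
  have h1 := Subgroup.card_inf_mul_card_inf_le H3 H4 H1
  have h2 := Subgroup.card_inf_mul_card_inf_le H3 H4 H2
  have h34 := Subgroup.card_inf_mul_card_inf_le H1 H2 (H3 ⊓ H4)
  simp only [inf_comm, inf_left_comm] at h1 h2 h34 ⊢
  calc _ = (Nat.card (H1 ⊓ H3 : Subgroup G) * Nat.card (H1 ⊓ H4 : Subgroup G)) *
        (Nat.card (H2 ⊓ H3 : Subgroup G) * Nat.card (H2 ⊓ H4 : Subgroup G)) := by ring
    _ ≤ (Nat.card H1 * Nat.card (H1 ⊓ (H3 ⊓ H4) : Subgroup G)) *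
        (Nat.card H2 * Nat.card (H2 ⊓ (H3 ⊓ H4) : Subgroup G)) := Nat.mul_le_mul h1 h2
    _ = Nat.card H1 * Nat.card H2 *
        (Nat.card (H1 ⊓ (H3 ⊓ H4) : Subgroup G) * Nat.card (H2 ⊓ (H3 ⊓ H4) : Subgroup G)) := by
        ring
    _ ≤ _ := (Nat.mul_le_mul_left _ h34).trans_eq (by ring)
end

section
/- If X is a finite cyclic group with subgroups A, B, C such that X equals the product set AB, then C = (A ∩ C)(B ∩ C). -/
open Pointwise

lemma mem_iff_pow_card {X : Type*} [Group X] [Finite X] [IsCyclic X] (A : Subgroup X) (y : X) :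
    y ∈ A ↔ y ^ Nat.card A = 1 := by
  classical
  constructor
  · intro hy
    have : (⟨y, hy⟩ : A) ^ Nat.card A = 1 := pow_card_eq_one'
    exact Subtype.ext_iff.mp this
  · intro hy
    have : Fintype X := Fintype.ofFinite X
    have ha : 0 < Nat.card A := Nat.card_pos
    let S : Finset X := {x : X | x ^ Nat.card A = 1}
    have hS : S.card ≤ Nat.card A := IsCyclic.card_pow_eq_one_le ha
    have hsub : (A : Set X).toFinset ⊆ S := by
      intro x hx
      simp only [S, Finset.mem_filter, Finset.mem_univ, true_and]
      rw [Set.mem_toFinset] at hx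
      have : (⟨x, hx⟩ : A) ^ Nat.card A = 1 := pow_card_eq_one'
      exact Subtype.ext_iff.mp this
    have hcard : Nat.card A ≤ (A : Set X).toFinset.card := by
      rw [Set.toFinset_card, Nat.card_eq_fintype_card]
      exact le_of_eq (Fintype.card_congr (Equiv.refl _))
    have heq : (A : Set X).toFinset = S :=
      Finset.eq_of_subset_of_card_le hsub (le_trans hS hcard)
    have : y ∈ S := Finset.mem_filter.mpr ⟨Finset.mem_univ y, hy⟩
    rw [← heq, Set.mem_toFinset] at this
    exact this

lemma div_mul_aux (d d1 a : ℕ) (h1 : d1 ∣ d) (h2 : d1 ∣ a) (h0 : d1 ≠ 0) :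
    d / d1 * a = d * (a / d1) := by
  obtain ⟨k, rfl⟩ := h2
  rw [Nat.mul_div_cancel_left k (Nat.pos_of_ne_zero h0), ← mul_assoc, Nat.div_mul_cancel h1]

theorem stmt6 {X : Type*} [Group X] [Finite X] [IsCyclic X] (A B C : Subgroup X)
    (h : (A : Set X) * (B : Set X) = Set.univ) :
    ((A ⊓ C : Subgroup X) : Set X) * ((B ⊓ C : Subgroup X) : Set X) = (C : Set X) := by
  obtain ⟨g, hg⟩ := IsCyclic.exists_generator (α := X)
  have hcomm : ∀ s t : X, Commute s t := by
    intro s t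
    obtain ⟨m, hm⟩ := hg s
    obtain ⟨n, hn⟩ := hg t
    exact hm ▸ hn ▸ Commute.zpow_zpow_self g m n
  apply Set.Subset.antisymm
  · rintro w ⟨u, hu, v, hv, rfl⟩
    exact mul_mem (Subgroup.mem_inf.mp hu).2 (Subgroup.mem_inf.mp hv).2
  · intro x hx
    set a := Nat.card A with ha
    set b := Nat.card B with hb
    set d := orderOf x with hdd
    have ha0 : a ≠ 0 := Nat.card_pos.ne'
    have hb0 : b ≠ 0 := Nat.card_pos.ne'
    have hd0 : d ≠ 0 := (orderOf_pos x).ne'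
    -- d divides lcm a b
    have hdlcm : d ∣ Nat.lcm a b := by
      rw [hdd, orderOf_dvd_iff_pow_eq_one]
      have : x ∈ (A : Set X) * (B : Set X) := by rw [h]; trivial
      obtain ⟨α, hα, β, hβ, rfl⟩ := this
      rw [(hcomm α β).mul_pow]
      have h1 : α ^ Nat.lcm a b = 1 :=
        orderOf_dvd_iff_pow_eq_one.mp
          ((orderOf_dvd_of_pow_eq_one ((mem_iff_pow_card A α).mp hα)).trans
            (Nat.dvd_lcm_left a b))
      have h2 : β ^ Nat.lcm a b = 1 :=
        orderOf_dvd_iff_pow_eq_one.mp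
          ((orderOf_dvd_of_pow_eq_one ((mem_iff_pow_card B β).mp hβ)).trans
            (Nat.dvd_lcm_right a b))
      rw [h1, h2, one_mul]
    set d1 := Nat.gcd d a with hd1
    set d2 := Nat.gcd d b with hd2
    have hd1d : d1 ∣ d := Nat.gcd_dvd_left d a
    have hd2d : d2 ∣ d := Nat.gcd_dvd_left d b
    have hd1a : d1 ∣ a := Nat.gcd_dvd_right d a
    have hd2b : d2 ∣ b := Nat.gcd_dvd_right d b
    have hd10 : d1 ≠ 0 := fun h0 => hd0 (by simpa [h0] using Nat.eq_zero_of_gcd_eq_zero_left h0)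
    have hd20 : d2 ≠ 0 := fun h0 => hd0 (by simpa [h0] using Nat.eq_zero_of_gcd_eq_zero_left h0)
    -- coprimality of d/d1 and d/d2
    have hcop : Nat.Coprime (d / d1) (d / d2) := by
      by_contra hc
      obtain ⟨p, hp, hpd⟩ := Nat.exists_prime_and_dvd hc
      have hp1 : p ∣ d / d1 := hpd.trans (Nat.gcd_dvd_left _ _)
      have hp2 : p ∣ d / d2 := hpd.trans (Nat.gcd_dvd_right _ _)
      have hq1 : d / d1 ≠ 0 := Nat.div_ne_zero_iff_of_dvd hd1d |>.mpr ⟨hd0, hd10⟩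
      have hq2 : d / d2 ≠ 0 := Nat.div_ne_zero_iff_of_dvd hd2d |>.mpr ⟨hd0, hd20⟩
      have hf1 : 1 ≤ (d / d1).factorization p := (Nat.Prime.dvd_iff_one_le_factorization hp hq1).mp hp1
      have hf2 : 1 ≤ (d / d2).factorization p := (Nat.Prime.dvd_iff_one_le_factorization hp hq2).mp hp2
      rw [Nat.factorization_div hd1d] at hf1
      rw [Nat.factorization_div hd2d] at hf2
      rw [hd1, Nat.factorization_gcd hd0 ha0] at hf1
      rw [hd2, Nat.factorization_gcd hd0 hb0] at hf2
      simp only [Finsupp.tsub_apply, Finsupp.inf_apply] at hf1 hf2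
      have hmax : d.factorization p ≤ max (a.factorization p) (b.factorization p) := by
        have := (Nat.factorization_le_iff_dvd hd0 (Nat.lcm_ne_zero ha0 hb0)).mpr hdlcm
        have h' := this p
        rwa [Nat.factorization_lcm ha0 hb0, Finsupp.sup_apply] at h'
      omega
    -- Bezout
    set q1 := d / d1 with hq1d
    set q2 := d / d2 with hq2d
    have hbez : (1 : ℤ) = q1 * Nat.gcdA q1 q2 + q2 * Nat.gcdB q1 q2 := by
      have := Nat.gcd_eq_gcd_ab q1 q2
      rwa [hcop, Nat.cast_one] at this
    set u := x ^ ((q1 : ℤ) * Nat.gcdA q1 q2) with hu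
    set v := x ^ ((q2 : ℤ) * Nat.gcdB q1 q2) with hv
    have huv : u * v = x := by
      rw [hu, hv, ← zpow_add, ← hbez, zpow_one]
    have hdq1a : (d : ℤ) ∣ (q1 : ℤ) * a := by
      have : d ∣ q1 * a := by
        exact Dvd.intro _ (div_mul_aux d d1 a hd1d hd1a hd10).symm
      exact_mod_cast Int.natCast_dvd_natCast.mpr this
    have hdq2b : (d : ℤ) ∣ (q2 : ℤ) * b := by
      have : d ∣ q2 * b := by
        exact Dvd.intro _ (div_mul_aux d d2 b hd2d hd2b hd20).symm
      exact_mod_cast Int.natCast_dvd_natCast.mpr this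
    have huA : u ∈ A := by
      rw [mem_iff_pow_card, hu, ← zpow_natCast, ← zpow_mul]
      refine orderOf_dvd_iff_zpow_eq_one.mp ?_
      rw [← hdd]
      have := hdq1a.mul_right (Nat.gcdA q1 q2)
      rwa [mul_right_comm] at this
    have hvB : v ∈ B := by
      rw [mem_iff_pow_card, hv, ← zpow_natCast, ← zpow_mul]
      refine orderOf_dvd_iff_zpow_eq_one.mp ?_
      rw [← hdd]
      have := hdq2b.mul_right (Nat.gcdB q1 q2)
      rwa [mul_right_comm] at this
    have huC : u ∈ C := C.zpow_mem hx _
    have hvC : v ∈ C := C.zpow_mem hx _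
    exact ⟨u, Subgroup.mem_inf.mpr ⟨huA, huC⟩, v, Subgroup.mem_inf.mpr ⟨hvB, hvC⟩, huv⟩
end

section
/- Let H1, H2, H3, H4 be subgroups of a finite group G with H1 cyclic. Then the Ingleton inequality |H1| · |H2| · |H3 ∩ H4| · |H1 ∩ H2 ∩ H3| · |H1 ∩ H2 ∩ H4| ≥ |H1 ∩ H2| · |H1 ∩ H3| · |H1 ∩ H4| · |H2 ∩ H3| · |H2 ∩ H4| holds; that is, a quadruple with H1 cyclic is never an Ingleton offender. -/
/-!
Write `n = |H₁|` and `a, b, c` for the orders of `H₁ ∩ H₂`, `H₁ ∩ H₃`, `H₁ ∩ H₄`. A subgroup of the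
cyclic group `H₁` is the set of solutions of `y ^ d = 1` for its order `d`, so intersections of
subgroups of `H₁` have gcd orders. The identity
`lcm(a,b,c) · gcd(a,b) · gcd(a,c) · gcd(b,c) = abc · gcd(a,b,c)` together with `lcm(a,b,c) ∣ n`
then gives `abc · |H₁∩H₂∩H₃∩H₄| ≤ n · |H₁∩H₂∩H₃| · |H₁∩H₂∩H₄| · |H₁∩H₃∩H₄|`. Multiply this by the
product bound `|A| |B| ≤ |L| |A ∩ B|` (for `A, B ≤ L`, i.e. `|AB| ≤ |L|`) applied to
`H₂∩H₃, H₂∩H₄ ≤ H₂` and to `H₁∩H₃∩H₄, H₂∩H₃∩H₄ ≤ H₃∩H₄`, and cancel.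
-/

open Subgroup

theorem Nat.lcm_lcm_mul_gcd_mul_gcd_mul_gcd (a b c : ℕ) :
    lcm a (lcm b c) * (gcd a b * gcd a c * gcd b c) = a * b * c * gcd (gcd a b) c := by
  rcases eq_or_ne a 0 with rfl | ha
  · simp
  rcases eq_or_ne b 0 with rfl | hb
  · simp
  rcases eq_or_ne c 0 with rfl | hc
  · simp
  refine factorization_inj (by simp [ha, hb, hc]) (by simp [ha, hb, hc]) ?_
  ext p
  simp only [ne_eq, lcm_eq_zero_iff, _root_.mul_eq_zero, gcd_eq_zero_iff, ha, hb, hc, or_self,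
    and_self, not_false_eq_true, factorization_mul, factorization_lcm, factorization_gcd,
    Finsupp.coe_add, Pi.add_apply, Finsupp.sup_apply, Finsupp.inf_apply]
  omega

theorem Subgroup.card_mul_relIndex {G : Type*} [Group G] {H K : Subgroup G} (h : H ≤ K) :
    Nat.card H * H.relIndex K = Nat.card K := by
  simpa only [relIndex_bot_left] using relIndex_mul_relIndex ⊥ H K bot_le h

theorem Subgroup.card_mul_card_le_card_mul_card_inf {G : Type*} [Group G] {A B L : Subgroup G}
    [Finite L] (hA : A ≤ L) (hB : B ≤ L) :
    Nat.card A * Nat.card B ≤ Nat.card L * Nat.card ↥(A ⊓ B) := by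
  have hAB : Nat.card ↥(A ⊓ B) * B.relIndex A = Nat.card A := by
    rw [← inf_relIndex_left, card_mul_relIndex inf_le_left]
  have hL : Nat.card B * B.relIndex L = Nat.card L := card_mul_relIndex hB
  have hrel : B.relIndex A ≤ B.relIndex L :=
    relIndex_le_of_le_right hA (right_ne_zero_of_mul (hL ▸ Nat.card_pos.ne'))
  calc Nat.card A * Nat.card B = Nat.card ↥(A ⊓ B) * Nat.card B * B.relIndex A := by
        rw [← hAB]; ring
    _ ≤ Nat.card ↥(A ⊓ B) * Nat.card B * B.relIndex L := by gcongr
    _ = Nat.card L * Nat.card ↥(A ⊓ B) := by rw [← hL]; ring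

section Cyclic

variable {C : Type*} [Group C] [Finite C] [IsCyclic C]

theorem IsCyclic.mem_of_pow_card_eq_one (Y : Subgroup C) {x : C} (hx : x ^ Nat.card Y = 1) :
    x ∈ Y := by
  classical
  have := Fintype.ofFinite C
  -- `Y` already supplies `|Y|` solutions of `y ^ |Y| = 1`, and a cyclic group has no more.
  have hsub : (Y : Set C) ⊆ {y | y ^ Nat.card Y = 1} := fun y hy =>
    orderOf_dvd_iff_pow_eq_one.1 (Y.orderOf_dvd_natCard hy)
  have hcard : {y : C | y ^ Nat.card Y = 1}.ncard ≤ (Y : Set C).ncard := by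
    rw [Set.ncard_eq_toFinset_card', Set.toFinset_ofPred, ← Nat.card_coe_set_eq (Y : Set C),
      SetLike.coe_sort_coe]
    exact IsCyclic.card_pow_eq_one_le Nat.card_pos
  exact (Set.eq_of_subset_of_ncard_le hsub hcard).symm.subset hx

theorem IsCyclic.card_inf (X Y : Subgroup C) :
    Nat.card ↥(X ⊓ Y) = Nat.gcd (Nat.card X) (Nat.card Y) := by
  refine Nat.dvd_antisymm
    (Nat.dvd_gcd (card_dvd_of_le inf_le_left) (card_dvd_of_le inf_le_right)) ?_
  obtain ⟨g, hg⟩ := IsCyclic.exists_ofOrder_eq_natCard (α := C)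
  set d := Nat.gcd (Nat.card X) (Nat.card Y)
  have hd : d ∣ orderOf g := hg ▸ (Nat.gcd_dvd_left _ _).trans X.card_subgroup_dvd_card
  have ht : orderOf (g ^ (orderOf g / d)) = d :=
    orderOf_pow_orderOf_div (hg ▸ Nat.card_pos.ne') hd
  have hmem (Z : Subgroup C) (hZ : d ∣ Nat.card Z) : g ^ (orderOf g / d) ∈ Z :=
    IsCyclic.mem_of_pow_card_eq_one Z (orderOf_dvd_iff_pow_eq_one.1 (by rwa [ht]))
  have hle : zpowers (g ^ (orderOf g / d)) ≤ X ⊓ Y :=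
    zpowers_le.2 ⟨hmem X (Nat.gcd_dvd_left _ _), hmem Y (Nat.gcd_dvd_right _ _)⟩
  simpa only [Nat.card_zpowers, ht] using card_dvd_of_le hle

end Cyclic

section

variable {G : Type*} [Group G] {H : Subgroup G} [Finite H] [IsCyclic H]

theorem Subgroup.card_inf_of_le_of_isCyclic {K L : Subgroup G} (hK : K ≤ H) (hL : L ≤ H) :
    Nat.card ↥(K ⊓ L) = Nat.gcd (Nat.card K) (Nat.card L) := by
  have hcard {M : Subgroup G} (hM : M ≤ H) : Nat.card (M.subgroupOf H) = Nat.card M :=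
    Nat.card_congr (subgroupOfEquivOfLe hM).toEquiv
  rw [← hcard (inf_le_left.trans hK), ← hcard hK, ← hcard hL]
  exact IsCyclic.card_inf (K.subgroupOf H) (L.subgroupOf H)

theorem Subgroup.card_mul_card_mul_card_mul_card_inf_inf_le_of_isCyclic {A B C : Subgroup G}
    (hA : A ≤ H) (hB : B ≤ H) (hC : C ≤ H) :
    Nat.card A * Nat.card B * Nat.card C * Nat.card ↥(A ⊓ B ⊓ C) ≤
      Nat.card H * (Nat.card ↥(A ⊓ B) * Nat.card ↥(A ⊓ C) * Nat.card ↥(B ⊓ C)) := by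
  rw [card_inf_of_le_of_isCyclic (inf_le_left.trans hA) hC, card_inf_of_le_of_isCyclic hA hB,
    card_inf_of_le_of_isCyclic hA hC, card_inf_of_le_of_isCyclic hB hC,
    ← Nat.lcm_lcm_mul_gcd_mul_gcd_mul_gcd]
  refine Nat.mul_le_mul_right _ (Nat.le_of_dvd Nat.card_pos ?_)
  exact Nat.lcm_dvd (card_dvd_of_le hA) (Nat.lcm_dvd (card_dvd_of_le hB) (card_dvd_of_le hC))

end

theorem stmt7 {G : Type*} [Group G] [Finite G] (H1 H2 H3 H4 : Subgroup G)
    (hc : IsCyclic H1) :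
    Nat.card (H1 : Subgroup G) * Nat.card (H2 : Subgroup G) * Nat.card (H3 ⊓ H4 : Subgroup G) * Nat.card (H1 ⊓ H2 ⊓ H3 : Subgroup G) * Nat.card (H1 ⊓ H2 ⊓ H4 : Subgroup G) ≥ Nat.card (H1 ⊓ H2 : Subgroup G) * Nat.card (H1 ⊓ H3 : Subgroup G) * Nat.card (H1 ⊓ H4 : Subgroup G) * Nat.card (H2 ⊓ H3 : Subgroup G) * Nat.card (H2 ⊓ H4 : Subgroup G) := by
  have hH1 := card_mul_card_mul_card_mul_card_inf_inf_le_of_isCyclic (H := H1)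
    (inf_le_left : H1 ⊓ H2 ≤ H1) (inf_le_left : H1 ⊓ H3 ≤ H1) (inf_le_left : H1 ⊓ H4 ≤ H1)
  have hH2 := card_mul_card_le_card_mul_card_inf
    (inf_le_left : H2 ⊓ H3 ≤ H2) (inf_le_left : H2 ⊓ H4 ≤ H2)
  have hH34 := card_mul_card_le_card_mul_card_inf
    (inf_le_right : H1 ⊓ (H3 ⊓ H4) ≤ H3 ⊓ H4) (inf_le_right : H2 ⊓ (H3 ⊓ H4) ≤ H3 ⊓ H4)
  simp only [inf_left_comm, inf_comm, inf_idem, inf_left_idem] at hH1 hH2 hH34 ⊢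
  have hpos : 0 < Nat.card ↥(H1 ⊓ (H3 ⊓ H4)) * Nat.card ↥(H2 ⊓ (H3 ⊓ H4)) *
      Nat.card ↥(H1 ⊓ (H2 ⊓ (H3 ⊓ H4))) :=
    Nat.mul_pos (Nat.mul_pos Nat.card_pos Nat.card_pos) Nat.card_pos
  refine Nat.le_of_mul_le_mul_right ?_ hpos
  linarith [Nat.mul_le_mul (Nat.mul_le_mul hH1 hH2) hH34]
end

section
/- Let H1, H2, H3, H4 be subgroups of a finite group G with H1 ∩ H3 = 1 (trivial). Then the Ingleton inequality holds for (H1, H2, H3, H4). -/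
/-! For subgroups `A, B ≤ C` the product set `AB` lies in `C`, so
`|A| |B| / |A ∩ B| = |AB| ≤ |C|`. Applied inside `H1` to `H1 ∩ H2, H1 ∩ H4` and inside `H2` to
`H2 ∩ H3, H2 ∩ H4`, and multiplied together, this is the Ingleton inequality once the factors
`|H1 ∩ H3|` and `|H1 ∩ H2 ∩ H3|` are `1`. -/

namespace Subgroup

variable {G : Type*} [Group G]

theorem card_mul_card_le_card_inf_mul_card {A B C : Subgroup G} (hA : A ≤ C) (hB : B ≤ C)
    (hBC : B.relIndex C ≠ 0) :
    Nat.card A * Nat.card B ≤ Nat.card (A ⊓ B : Subgroup G) * Nat.card C := by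
  have hcardA := card_inf_mul_relIndex B A
  have hcardC := card_inf_mul_relIndex B C
  rw [inf_of_le_left hB] at hcardC
  rw [← hcardA, ← hcardC, inf_comm B A, mul_right_comm, mul_assoc]
  exact Nat.mul_le_mul_left _ (Nat.mul_le_mul_left _ (relIndex_le_of_le_right hA hBC))

end Subgroup

open Subgroup in
theorem stmt9 {G : Type*} [Group G] [Finite G] (H1 H2 H3 H4 : Subgroup G)
    (h : H1 ⊓ H3 = ⊥) :
    Nat.card (H1 : Subgroup G) * Nat.card (H2 : Subgroup G) * Nat.card (H3 ⊓ H4 : Subgroup G) * Nat.card (H1 ⊓ H2 ⊓ H3 : Subgroup G) * Nat.card (H1 ⊓ H2 ⊓ H4 : Subgroup G) ≥ Nat.card (H1 ⊓ H2 : Subgroup G) * Nat.card (H1 ⊓ H3 : Subgroup G) * Nat.card (H1 ⊓ H4 : Subgroup G) * Nat.card (H2 ⊓ H3 : Subgroup G) * Nat.card (H2 ⊓ H4 : Subgroup G) := by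
  have h123 : H1 ⊓ H2 ⊓ H3 = ⊥ :=
    le_bot_iff.mp (h ▸ inf_le_inf_right H3 inf_le_left)
  have inside_H1 : Nat.card (H1 ⊓ H2 : Subgroup G) * Nat.card (H1 ⊓ H4 : Subgroup G)
      ≤ Nat.card (H1 ⊓ H2 ⊓ H4 : Subgroup G) * Nat.card H1 := by
    have hinf : H1 ⊓ H2 ⊓ (H1 ⊓ H4) = H1 ⊓ H2 ⊓ H4 := by
      rw [inf_assoc, inf_left_comm H2, ← inf_assoc, inf_idem, inf_assoc]
    simpa only [hinf] using card_mul_card_le_card_inf_mul_card (inf_le_left : H1 ⊓ H2 ≤ H1)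
      (inf_le_left : H1 ⊓ H4 ≤ H1) isFiniteRelIndex_of_finiteIndex.relIndex_ne_zero
  have inside_H2 : Nat.card (H2 ⊓ H3 : Subgroup G) * Nat.card (H2 ⊓ H4 : Subgroup G)
      ≤ Nat.card (H3 ⊓ H4 : Subgroup G) * Nat.card H2 :=
    (card_mul_card_le_card_inf_mul_card (inf_le_left : H2 ⊓ H3 ≤ H2) inf_le_left
      isFiniteRelIndex_of_finiteIndex.relIndex_ne_zero).trans <|
      Nat.mul_le_mul_right _ <| card_le_of_le <| inf_le_inf inf_le_right inf_le_right
  rw [h, h123, card_bot]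
  nlinarith [Nat.mul_le_mul inside_H1 inside_H2]
end

section
/- Let H1, H2, H3, H4 be subgroups of a finite group G with H3 ≤ H1. Then the Ingleton inequality holds for (H1, H2, H3, H4). -/
/-!
Since `H3 ≤ H1`, we have `H1 ⊓ H3 = H3` and `H1 ⊓ H2 ⊓ H3 = H2 ⊓ H3`, and the inequality becomes the
product of two instances of `|A| |B| ≤ |C| |A ⊓ B|` for subgroups `A, B ≤ C` (the product set `A B`,
of size `|A| |B| / |A ⊓ B|`, lies in `C`): namely `(A, B, C) = (H3, H1 ⊓ H4, H1)` and
`(A, B, C) = (H1 ⊓ H2, H2 ⊓ H4, H2)`.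
-/

namespace Subgroup

variable {G : Type*} [Group G] {A B C : Subgroup G}

theorem card_mul_relIndex_s12 (h : A ≤ C) : Nat.card A * A.relIndex C = Nat.card C := by
  simpa only [relIndex_bot_left] using relIndex_mul_relIndex ⊥ A C bot_le h

theorem card_mul_card_le_card_mul_card_inf_s12 [A.IsFiniteRelIndex C] (hA : A ≤ C) (hB : B ≤ C) :
    Nat.card A * Nat.card B ≤ Nat.card C * Nat.card (A ⊓ B : Subgroup G) :=
  calc Nat.card A * Nat.card B
      = Nat.card A * (Nat.card (A ⊓ B : Subgroup G) * A.relIndex B) := by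
        rw [← inf_relIndex_right A B, card_mul_relIndex_s12 inf_le_right]
    _ ≤ Nat.card A * (Nat.card (A ⊓ B : Subgroup G) * A.relIndex C) := by
        gcongr
        exact relIndex_le_of_le_right hB relIndex_ne_zero
    _ = Nat.card C * Nat.card (A ⊓ B : Subgroup G) := by
        rw [← card_mul_relIndex_s12 hA]
        ring

end Subgroup

open Subgroup in
theorem stmt12 {G : Type*} [Group G] [Finite G] (H1 H2 H3 H4 : Subgroup G)
    (h : H3 ≤ H1) :
    Nat.card (H1 : Subgroup G) * Nat.card (H2 : Subgroup G) * Nat.card (H3 ⊓ H4 : Subgroup G) * Nat.card (H1 ⊓ H2 ⊓ H3 : Subgroup G) * Nat.card (H1 ⊓ H2 ⊓ H4 : Subgroup G) ≥ Nat.card (H1 ⊓ H2 : Subgroup G) * Nat.card (H1 ⊓ H3 : Subgroup G) * Nat.card (H1 ⊓ H4 : Subgroup G) * Nat.card (H2 ⊓ H3 : Subgroup G) * Nat.card (H2 ⊓ H4 : Subgroup G) := by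
  have h13 : H1 ⊓ H3 = H3 := inf_eq_right.mpr h
  have h123 : H1 ⊓ H2 ⊓ H3 = H2 ⊓ H3 := by
    rw [inf_right_comm, h13, inf_comm]
  have (K L : Subgroup G) : K.IsFiniteRelIndex L := isFiniteRelIndex_of_finiteIndex
  have in_H1 := card_mul_card_le_card_mul_card_inf_s12 (A := H3) (B := H1 ⊓ H4) h inf_le_left
  have in_H2 := card_mul_card_le_card_mul_card_inf_s12 (A := H1 ⊓ H2) (B := H2 ⊓ H4)
    inf_le_right inf_le_left
  rw [← inf_assoc, inf_of_le_left h] at in_H1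
  rw [inf_assoc H1, ← inf_assoc H2, inf_idem, ← inf_assoc] at in_H2
  rw [h13, h123, ge_iff_le]
  calc _ = Nat.card H3 * Nat.card (H1 ⊓ H4 : Subgroup G) *
          (Nat.card (H1 ⊓ H2 : Subgroup G) * Nat.card (H2 ⊓ H4 : Subgroup G)) *
          Nat.card (H2 ⊓ H3 : Subgroup G) := by ring
    _ ≤ Nat.card H1 * Nat.card (H3 ⊓ H4 : Subgroup G) *
          (Nat.card H2 * Nat.card (H1 ⊓ H2 ⊓ H4 : Subgroup G)) *
          Nat.card (H2 ⊓ H3 : Subgroup G) := by gcongr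
    _ = _ := by ring
end

section
/- Let H1, H2, H3, H4 be subgroups of a finite group G such that the product set H1H2 is a subgroup of G. Then the Ingleton inequality holds for (H1, H2, H3, H4). -/
open Pointwise

lemma aux1 {G : Type*} [Group G] [Finite G] (P Q : Subgroup G) (A B : Set G)
    (hA : A ⊆ P) (hB : B ⊆ Q) :
    Nat.card A * Nat.card B ≤ Nat.card (A * B : Set G) * Nat.card (P ⊓ Q : Subgroup G) := by
  choose a0 ha0 b0 hb0 hab using fun k : ↥(A * B) => Set.mem_mul.mp k.2
  have hmem : ∀ p : ↥A × ↥B, ∀ k : ↥(A * B), (k : G) = (p.1 : G) * p.2 →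
      (a0 k)⁻¹ * (p.1 : G) ∈ P ⊓ Q := by
    intro p k hk
    refine Subgroup.mem_inf.mpr ⟨mul_mem (inv_mem (hA (ha0 k))) (hA p.1.2), ?_⟩
    have h2 : (a0 k)⁻¹ * (p.1 : G) = b0 k * (p.2 : G)⁻¹ := by
      rw [inv_mul_eq_iff_eq_mul, ← mul_assoc, hab k, hk, mul_assoc, mul_inv_cancel, mul_one]
    rw [h2]
    exact mul_mem (hB (hb0 k)) (inv_mem (hB p.2.2))
  let f : ↥A × ↥B → ↥(A * B) × ↥(P ⊓ Q : Subgroup G) := fun p =>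
    let k : ↥(A * B) := ⟨(p.1 : G) * p.2, Set.mul_mem_mul p.1.2 p.2.2⟩
    (k, ⟨(a0 k)⁻¹ * (p.1 : G), hmem p k rfl⟩)
  have hf : Function.Injective f := by
    intro p q hpq
    simp only [f, Prod.mk.injEq, Subtype.mk.injEq] at hpq
    obtain ⟨h1, h2⟩ := hpq
    have hk : (⟨(p.1 : G) * p.2, Set.mul_mem_mul p.1.2 p.2.2⟩ : ↥(A * B)) =
        ⟨(q.1 : G) * q.2, Set.mul_mem_mul q.1.2 q.2.2⟩ := Subtype.ext h1
    rw [hk] at h2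
    have e1 : (p.1 : G) = q.1 := mul_left_cancel h2
    have e2 : (p.1 : G) * p.2 = (q.1 : G) * q.2 := by
      simpa using congrArg Subtype.val hk
    rw [e1] at e2
    have e3 : (p.2 : G) = q.2 := mul_left_cancel e2
    exact Prod.ext (Subtype.ext e1) (Subtype.ext e3)
  calc Nat.card A * Nat.card B = Nat.card (↥A × ↥B) := (Nat.card_prod _ _).symm
    _ ≤ Nat.card (↥(A * B) × ↥(P ⊓ Q : Subgroup G)) := Nat.card_le_card_of_injective f hf
    _ = _ := Nat.card_prod _ _

lemma aux2 {G : Type*} [Group G] [Finite G] (P Q : Subgroup G) :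
    Nat.card ((P : Set G) * Q : Set G) * Nat.card (P ⊓ Q : Subgroup G) ≤
      Nat.card P * Nat.card Q := by
  choose a0 ha0 b0 hb0 hab using fun k : ↥((P : Set G) * Q) => Set.mem_mul.mp k.2
  let g : ↥((P : Set G) * Q) × ↥(P ⊓ Q : Subgroup G) → ↥P × ↥Q := fun p =>
    (⟨a0 p.1 * p.2, mul_mem (ha0 p.1) p.2.2.1⟩,
     ⟨(p.2 : G)⁻¹ * b0 p.1, mul_mem (inv_mem p.2.2.2) (hb0 p.1)⟩)
  have hg : Function.Injective g := by
    intro p q hpq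
    simp only [g, Prod.mk.injEq, Subtype.mk.injEq] at hpq
    obtain ⟨h1, h2⟩ := hpq
    have e0 : (p.1 : G) = q.1 := by
      have := congrArg₂ (· * ·) h1 h2
      simp only [mul_assoc] at this
      rwa [mul_inv_cancel_left, mul_inv_cancel_left, hab p.1, hab q.1] at this
    have ek : p.1 = q.1 := Subtype.ext e0
    rw [ek] at h1
    have e2 : (p.2 : G) = q.2 := mul_left_cancel h1
    exact Prod.ext ek (Subtype.ext e2)
  calc Nat.card ((P : Set G) * Q : Set G) * Nat.card (P ⊓ Q : Subgroup G)
      = Nat.card (↥((P : Set G) * Q) × ↥(P ⊓ Q : Subgroup G)) := (Nat.card_prod _ _).symm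
    _ ≤ Nat.card (↥P × ↥Q) := Nat.card_le_card_of_injective g hg
    _ = _ := Nat.card_prod _ _

theorem stmt13 {G : Type*} [Group G] [Finite G] (H1 H2 H3 H4 : Subgroup G)
    (h : ∃ K : Subgroup G, (K : Set G) = (H1 : Set G) * (H2 : Set G)) :
    Nat.card (H1 : Subgroup G) * Nat.card (H2 : Subgroup G) * Nat.card (H3 ⊓ H4 : Subgroup G) * Nat.card (H1 ⊓ H2 ⊓ H3 : Subgroup G) * Nat.card (H1 ⊓ H2 ⊓ H4 : Subgroup G) ≥ Nat.card (H1 ⊓ H2 : Subgroup G) * Nat.card (H1 ⊓ H3 : Subgroup G) * Nat.card (H1 ⊓ H4 : Subgroup G) * Nat.card (H2 ⊓ H3 : Subgroup G) * Nat.card (H2 ⊓ H4 : Subgroup G) := by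
  obtain ⟨K, hK⟩ := h
  set A : Set G := (↑(H1 ⊓ H3) : Set G) * ↑(H2 ⊓ H3) with hA
  set B : Set G := (↑(H1 ⊓ H4) : Set G) * ↑(H2 ⊓ H4) with hB
  have hAK : A ⊆ (K : Set G) := by
    rw [hK]
    exact Set.mul_subset_mul (fun x hx => hx.1) (fun x hx => hx.1)
  have hBK : B ⊆ (K : Set G) := by
    rw [hK]
    exact Set.mul_subset_mul (fun x hx => hx.1) (fun x hx => hx.1)
  have hABK : A * B ⊆ (K : Set G) := by
    intro x hx
    obtain ⟨a, ha, b, hb, rfl⟩ := Set.mem_mul.mp hx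
    exact mul_mem (hAK ha) (hBK hb)
  have e3 : (H1 ⊓ H3) ⊓ (H2 ⊓ H3) = H1 ⊓ H2 ⊓ H3 := by
    ext x; simp [Subgroup.mem_inf]; tauto
  have e4 : (H1 ⊓ H4) ⊓ (H2 ⊓ H4) = H1 ⊓ H2 ⊓ H4 := by
    ext x; simp [Subgroup.mem_inf]; tauto
  have h1 : Nat.card (H1 ⊓ H3 : Subgroup G) * Nat.card (H2 ⊓ H3 : Subgroup G) ≤
      Nat.card A * Nat.card (H1 ⊓ H2 ⊓ H3 : Subgroup G) := by
    have := aux1 (H1 ⊓ H3) (H2 ⊓ H3) (↑(H1 ⊓ H3)) (↑(H2 ⊓ H3)) le_rfl le_rfl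
    rwa [e3] at this
  have h2 : Nat.card (H1 ⊓ H4 : Subgroup G) * Nat.card (H2 ⊓ H4 : Subgroup G) ≤
      Nat.card B * Nat.card (H1 ⊓ H2 ⊓ H4 : Subgroup G) := by
    have := aux1 (H1 ⊓ H4) (H2 ⊓ H4) (↑(H1 ⊓ H4)) (↑(H2 ⊓ H4)) le_rfl le_rfl
    rwa [e4] at this
  have hA3 : A ⊆ (H3 : Set G) := by
    intro x hx
    obtain ⟨a, ha, b, hb, rfl⟩ := Set.mem_mul.mp hx
    exact mul_mem ha.2 hb.2
  have hB4 : B ⊆ (H4 : Set G) := by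
    intro x hx
    obtain ⟨a, ha, b, hb, rfl⟩ := Set.mem_mul.mp hx
    exact mul_mem ha.2 hb.2
  have h3 : Nat.card A * Nat.card B ≤
      Nat.card (A * B : Set G) * Nat.card (H3 ⊓ H4 : Subgroup G) :=
    aux1 H3 H4 A B hA3 hB4
  have h4 : Nat.card (A * B : Set G) ≤ Nat.card K :=
    Nat.card_mono (Set.toFinite _) hABK
  have h5 : Nat.card K * Nat.card (H1 ⊓ H2 : Subgroup G) ≤ Nat.card H1 * Nat.card H2 := by
    have := aux2 H1 H2
    rwa [← hK] at this
  set cA := Nat.card A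
  set cB := Nat.card B
  set cAB := Nat.card (A * B : Set G)
  set cK := Nat.card K
  calc Nat.card (H1 ⊓ H2 : Subgroup G) * Nat.card (H1 ⊓ H3 : Subgroup G) *
        Nat.card (H1 ⊓ H4 : Subgroup G) * Nat.card (H2 ⊓ H3 : Subgroup G) *
        Nat.card (H2 ⊓ H4 : Subgroup G)
      = (Nat.card (H1 ⊓ H3 : Subgroup G) * Nat.card (H2 ⊓ H3 : Subgroup G)) *
        ((Nat.card (H1 ⊓ H4 : Subgroup G) * Nat.card (H2 ⊓ H4 : Subgroup G)) *
        Nat.card (H1 ⊓ H2 : Subgroup G)) := by ring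
    _ ≤ (cA * Nat.card (H1 ⊓ H2 ⊓ H3 : Subgroup G)) *
        ((cB * Nat.card (H1 ⊓ H2 ⊓ H4 : Subgroup G)) *
        Nat.card (H1 ⊓ H2 : Subgroup G)) := by
        exact Nat.mul_le_mul h1 (Nat.mul_le_mul h2 le_rfl)
    _ = (cA * cB) * (Nat.card (H1 ⊓ H2 ⊓ H3 : Subgroup G) *
        Nat.card (H1 ⊓ H2 ⊓ H4 : Subgroup G) * Nat.card (H1 ⊓ H2 : Subgroup G)) := by ring
    _ ≤ (cAB * Nat.card (H3 ⊓ H4 : Subgroup G)) *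
        (Nat.card (H1 ⊓ H2 ⊓ H3 : Subgroup G) *
        Nat.card (H1 ⊓ H2 ⊓ H4 : Subgroup G) * Nat.card (H1 ⊓ H2 : Subgroup G)) :=
        Nat.mul_le_mul h3 le_rfl
    _ ≤ (cK * Nat.card (H3 ⊓ H4 : Subgroup G)) *
        (Nat.card (H1 ⊓ H2 ⊓ H3 : Subgroup G) *
        Nat.card (H1 ⊓ H2 ⊓ H4 : Subgroup G) * Nat.card (H1 ⊓ H2 : Subgroup G)) := by
        exact Nat.mul_le_mul (Nat.mul_le_mul h4 le_rfl) le_rfl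
    _ = (cK * Nat.card (H1 ⊓ H2 : Subgroup G)) *
        (Nat.card (H3 ⊓ H4 : Subgroup G) * Nat.card (H1 ⊓ H2 ⊓ H3 : Subgroup G) *
        Nat.card (H1 ⊓ H2 ⊓ H4 : Subgroup G)) := by ring
    _ ≤ (Nat.card H1 * Nat.card H2) *
        (Nat.card (H3 ⊓ H4 : Subgroup G) * Nat.card (H1 ⊓ H2 ⊓ H3 : Subgroup G) *
        Nat.card (H1 ⊓ H2 ⊓ H4 : Subgroup G)) := Nat.mul_le_mul h5 le_rfl
    _ = _ := by ring
end

section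
/- Let G be a finite group, (H1,H2,H3,H4) an Ingleton offender in G (i.e., the Ingleton inequality fails), and N a normal subgroup of G with N ≤ H1 ∩ H2 ∩ H3 ∩ H4. Then the images (H1/N, H2/N, H3/N, H4/N) form an Ingleton offender in G/N. -/
/-!
For `N ⊴ G` contained in `K`, the order of `K` is `|N| · |K/N|`, and taking images in `G/N` commutes
with intersecting with a subgroup containing `N`. Hence each of the ten orders in the Ingleton
inequality for `(H₁/N, H₂/N, H₃/N, H₄/N)` is the corresponding order for `(H₁, H₂, H₃, H₄)` divided
by `|N|`; both sides have five factors, so the strict inequality is preserved.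
-/

namespace Subgroup

variable {G G' : Type*} [Group G] [Group G']

theorem card_ker_mul_card_map {f : G →* G'} {K : Subgroup G} (hK : f.ker ≤ K) :
    Nat.card f.ker * Nat.card (K.map f) = Nat.card K := by
  simpa only [relIndex_bot_left, relIndex_ker] using relIndex_mul_relIndex ⊥ f.ker K bot_le hK

theorem map_inf_of_ker_le_left {f : G →* G'} {A : Subgroup G} (B : Subgroup G) (hA : f.ker ≤ A) :
    (A ⊓ B).map f = A.map f ⊓ B.map f := by
  refine le_antisymm (map_inf_le A B f) ?_
  rintro _ ⟨⟨a, ha, rfl⟩, b, hb, hba⟩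
  have hab : a⁻¹ * b ∈ f.ker := by simp [MonoidHom.mem_ker, hba]
  exact ⟨b, ⟨by simpa using mul_mem ha (hA hab), hb⟩, hba⟩

end Subgroup

open Subgroup QuotientGroup in
theorem stmt15_general {G : Type*} [Group G] (H1 H2 H3 H4 N : Subgroup G)
    [N.Normal] (hN : N ≤ H1 ⊓ H2 ⊓ H3 ⊓ H4)
    (hoff : Nat.card (H1 : Subgroup G) * Nat.card (H2 : Subgroup G) * Nat.card (H3 ⊓ H4 : Subgroup G) * Nat.card (H1 ⊓ H2 ⊓ H3 : Subgroup G) * Nat.card (H1 ⊓ H2 ⊓ H4 : Subgroup G) < Nat.card (H1 ⊓ H2 : Subgroup G) * Nat.card (H1 ⊓ H3 : Subgroup G) * Nat.card (H1 ⊓ H4 : Subgroup G) * Nat.card (H2 ⊓ H3 : Subgroup G) * Nat.card (H2 ⊓ H4 : Subgroup G)) :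
    Nat.card ((H1.map (QuotientGroup.mk' N)) : Subgroup (G ⧸ N)) * Nat.card ((H2.map (QuotientGroup.mk' N)) : Subgroup (G ⧸ N)) * Nat.card ((H3.map (QuotientGroup.mk' N)) ⊓ (H4.map (QuotientGroup.mk' N)) : Subgroup (G ⧸ N)) * Nat.card ((H1.map (QuotientGroup.mk' N)) ⊓ (H2.map (QuotientGroup.mk' N)) ⊓ (H3.map (QuotientGroup.mk' N)) : Subgroup (G ⧸ N)) * Nat.card ((H1.map (QuotientGroup.mk' N)) ⊓ (H2.map (QuotientGroup.mk' N)) ⊓ (H4.map (QuotientGroup.mk' N)) : Subgroup (G ⧸ N)) < Nat.card ((H1.map (QuotientGroup.mk' N)) ⊓ (H2.map (QuotientGroup.mk' N)) : Subgroup (G ⧸ N)) * Nat.card ((H1.map (QuotientGroup.mk' N)) ⊓ (H3.map (QuotientGroup.mk' N)) : Subgroup (G ⧸ N)) * Nat.card ((H1.map (QuotientGroup.mk' N)) ⊓ (H4.map (QuotientGroup.mk' N)) : Subgroup (G ⧸ N)) * Nat.card ((H2.map (QuotientGroup.mk' N)) ⊓ (H3.map (QuotientGroup.mk' N)) : Subgroup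 (G ⧸ N)) * Nat.card ((H2.map (QuotientGroup.mk' N)) ⊓ (H4.map (QuotientGroup.mk' N)) : Subgroup (G ⧸ N)) := by
  obtain ⟨⟨⟨h1, h2⟩, h3⟩, h4⟩ : ((N ≤ H1 ∧ N ≤ H2) ∧ N ≤ H3) ∧ N ≤ H4 := by
    simpa only [le_inf_iff] using hN
  have map_inf {A : Subgroup G} (B : Subgroup G) (hA : N ≤ A) :
      (A ⊓ B).map (mk' N) = A.map (mk' N) ⊓ B.map (mk' N) :=
    map_inf_of_ker_le_left B (by rwa [ker_mk'])
  have card_eq (K : Subgroup G) (hK : N ≤ K) :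
      Nat.card K = Nat.card N * Nat.card (K.map (mk' N)) := by
    rw [← card_ker_mul_card_map (f := mk' N) (by rwa [ker_mk']), ker_mk']
  rw [← map_inf H4 h3, ← map_inf H2 h1, ← map_inf H3 h1, ← map_inf H4 h1, ← map_inf H3 h2,
    ← map_inf H4 h2, ← map_inf H3 (le_inf h1 h2), ← map_inf H4 (le_inf h1 h2)]
  rw [card_eq H1 h1, card_eq H2 h2, card_eq _ (le_inf h3 h4), card_eq _ (le_inf (le_inf h1 h2) h3),
    card_eq _ (le_inf (le_inf h1 h2) h4), card_eq _ (le_inf h1 h2), card_eq _ (le_inf h1 h3),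
    card_eq _ (le_inf h1 h4), card_eq _ (le_inf h2 h3), card_eq _ (le_inf h2 h4)] at hoff
  refine Nat.lt_of_mul_lt_mul_left (a := Nat.card N ^ 5) ?_
  convert hoff using 1 <;> ring

theorem stmt15 {G : Type*} [Group G] [Finite G] (H1 H2 H3 H4 N : Subgroup G)
    [N.Normal] (hN : N ≤ H1 ⊓ H2 ⊓ H3 ⊓ H4)
    (hoff : Nat.card (H1 : Subgroup G) * Nat.card (H2 : Subgroup G) * Nat.card (H3 ⊓ H4 : Subgroup G) * Nat.card (H1 ⊓ H2 ⊓ H3 : Subgroup G) * Nat.card (H1 ⊓ H2 ⊓ H4 : Subgroup G) < Nat.card (H1 ⊓ H2 : Subgroup G) * Nat.card (H1 ⊓ H3 : Subgroup G) * Nat.card (H1 ⊓ H4 : Subgroup G) * Nat.card (H2 ⊓ H3 : Subgroup G) * Nat.card (H2 ⊓ H4 : Subgroup G)) :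
    Nat.card ((H1.map (QuotientGroup.mk' N)) : Subgroup (G ⧸ N)) * Nat.card ((H2.map (QuotientGroup.mk' N)) : Subgroup (G ⧸ N)) * Nat.card ((H3.map (QuotientGroup.mk' N)) ⊓ (H4.map (QuotientGroup.mk' N)) : Subgroup (G ⧸ N)) * Nat.card ((H1.map (QuotientGroup.mk' N)) ⊓ (H2.map (QuotientGroup.mk' N)) ⊓ (H3.map (QuotientGroup.mk' N)) : Subgroup (G ⧸ N)) * Nat.card ((H1.map (QuotientGroup.mk' N)) ⊓ (H2.map (QuotientGroup.mk' N)) ⊓ (H4.map (QuotientGroup.mk' N)) : Subgroup (G ⧸ N)) < Nat.card ((H1.map (QuotientGroup.mk' N)) ⊓ (H2.map (QuotientGroup.mk' N)) : Subgroup (G ⧸ N)) * Nat.card ((H1.map (QuotientGroup.mk' N)) ⊓ (H3.map (QuotientGroup.mk' N)) : Subgroup (G ⧸ N)) * Nat.card ((H1.map (QuotientGroup.mk' N)) ⊓ (H4.map (QuotientGroup.mk' N)) : Subgroup (G ⧸ N)) * Nat.card ((H2.map (QuotientGroup.mk' N)) ⊓ (H3.map (QuotientGroup.mk' N)) : Subgroup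 (G ⧸ N)) * Nat.card ((H2.map (QuotientGroup.mk' N)) ⊓ (H4.map (QuotientGroup.mk' N)) : Subgroup (G ⧸ N)) :=
  stmt15_general H1 H2 H3 H4 N hN hoff
end

section
/- Let G be a finite group and (H1,H2,H3,H4) an Ingleton offender in G. If K1 is the subgroup generated by H1 ∩ H3 and H1 ∩ H4, then (K1, H2, H3, H4) is also an Ingleton offender. -/
/-!
Every factor of the Ingleton inequality that involves `H1` together with `H3` or `H4` only sees
`H1 ∩ H3` and `H1 ∩ H4`, so it is unchanged when `H1` is replaced by `K1`. The remaining factors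
enter through `|H1| / |H1 ∩ H2| = [H1 : H1 ∩ H2]`, and this relative index can only drop when
passing to the subgroup `K1 ≤ H1`, which makes the violated inequality even more violated.
-/

theorem Nat.mul_lt_mul_of_mul_le_mul_of_mul_lt_mul {a b c d x y : ℕ} (hd : 0 < d)
    (hbc : b * c ≤ a * d) (hax : a * x < c * y) : b * x < d * y := by
  have hc : 0 < c := Nat.pos_of_mul_pos_right (Nat.zero_lt_of_lt hax)
  refine Nat.lt_of_mul_lt_mul_right (a := c) ?_
  calc b * x * c = b * c * x := by ring
    _ ≤ a * d * x := Nat.mul_le_mul_right x hbc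
    _ = d * (a * x) := by ring
    _ < d * (c * y) := Nat.mul_lt_mul_of_pos_left hax hd
    _ = d * y * c := by ring

namespace Subgroup

variable {G : Type*} [Group G]

theorem card_mul_card_inf_le_card_mul_card_inf {K H : Subgroup G} [Finite H] (hKH : K ≤ H)
    (L : Subgroup G) :
    Nat.card K * Nat.card (H ⊓ L : Subgroup G) ≤ Nat.card H * Nat.card (K ⊓ L : Subgroup G) := by
  have hH : L.relIndex H ≠ 0 :=
    right_ne_zero_of_mul (by rw [card_inf_mul_relIndex]; exact Nat.card_pos.ne')
  have hrel : L.relIndex K ≤ L.relIndex H := relIndex_le_of_le_right hKH hH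
  rw [← card_inf_mul_relIndex L K, ← card_inf_mul_relIndex L H, inf_comm L, inf_comm L]
  calc Nat.card (K ⊓ L : Subgroup G) * L.relIndex K * Nat.card (H ⊓ L : Subgroup G)
      ≤ Nat.card (K ⊓ L : Subgroup G) * L.relIndex H * Nat.card (H ⊓ L : Subgroup G) := by gcongr
    _ = _ := by ring

end Subgroup

section Ingleton

variable {G : Type*} [Group G]

def IsIngletonOffender (H1 H2 H3 H4 : Subgroup G) : Prop :=
  Nat.card H1 * Nat.card H2 * Nat.card (H3 ⊓ H4 : Subgroup G) *
      Nat.card (H1 ⊓ H2 ⊓ H3 : Subgroup G) * Nat.card (H1 ⊓ H2 ⊓ H4 : Subgroup G) <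
    Nat.card (H1 ⊓ H2 : Subgroup G) * Nat.card (H1 ⊓ H3 : Subgroup G) *
      Nat.card (H1 ⊓ H4 : Subgroup G) * Nat.card (H2 ⊓ H3 : Subgroup G) *
      Nat.card (H2 ⊓ H4 : Subgroup G)

theorem IsIngletonOffender.of_le_of_inf_le [Finite G] {H1 H2 H3 H4 K : Subgroup G}
    (h : IsIngletonOffender H1 H2 H3 H4) (hK : K ≤ H1) (h3 : H1 ⊓ H3 ≤ K) (h4 : H1 ⊓ H4 ≤ K) :
    IsIngletonOffender K H2 H3 H4 := by
  have hK3 : K ⊓ H3 = H1 ⊓ H3 := le_antisymm (inf_le_inf_right H3 hK) (le_inf h3 inf_le_right)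
  have hK4 : K ⊓ H4 = H1 ⊓ H4 := le_antisymm (inf_le_inf_right H4 hK) (le_inf h4 inf_le_right)
  have hK23 : K ⊓ H2 ⊓ H3 = H1 ⊓ H2 ⊓ H3 := by rw [inf_right_comm, hK3, inf_right_comm]
  have hK24 : K ⊓ H2 ⊓ H4 = H1 ⊓ H2 ⊓ H4 := by rw [inf_right_comm, hK4, inf_right_comm]
  unfold IsIngletonOffender at h ⊢
  rw [hK3, hK4, hK23, hK24]
  simp only [mul_assoc] at h ⊢
  exact Nat.mul_lt_mul_of_mul_le_mul_of_mul_lt_mul Nat.card_pos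
    (Subgroup.card_mul_card_inf_le_card_mul_card_inf hK H2) h

end Ingleton

theorem stmt19 {G : Type*} [Group G] [Finite G] (H1 H2 H3 H4 : Subgroup G)
    (hoff : Nat.card (H1 : Subgroup G) * Nat.card (H2 : Subgroup G) * Nat.card (H3 ⊓ H4 : Subgroup G) * Nat.card (H1 ⊓ H2 ⊓ H3 : Subgroup G) * Nat.card (H1 ⊓ H2 ⊓ H4 : Subgroup G) < Nat.card (H1 ⊓ H2 : Subgroup G) * Nat.card (H1 ⊓ H3 : Subgroup G) * Nat.card (H1 ⊓ H4 : Subgroup G) * Nat.card (H2 ⊓ H3 : Subgroup G) * Nat.card (H2 ⊓ H4 : Subgroup G)) :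
    Nat.card (((H1 ⊓ H3) ⊔ (H1 ⊓ H4)) : Subgroup G) * Nat.card (H2 : Subgroup G) * Nat.card (H3 ⊓ H4 : Subgroup G) * Nat.card (((H1 ⊓ H3) ⊔ (H1 ⊓ H4)) ⊓ H2 ⊓ H3 : Subgroup G) * Nat.card (((H1 ⊓ H3) ⊔ (H1 ⊓ H4)) ⊓ H2 ⊓ H4 : Subgroup G) < Nat.card (((H1 ⊓ H3) ⊔ (H1 ⊓ H4)) ⊓ H2 : Subgroup G) * Nat.card (((H1 ⊓ H3) ⊔ (H1 ⊓ H4)) ⊓ H3 : Subgroup G) * Nat.card (((H1 ⊓ H3) ⊔ (H1 ⊓ H4)) ⊓ H4 : Subgroup G) * Nat.card (H2 ⊓ H3 : Subgroup G) * Nat.card (H2 ⊓ H4 : Subgroup G) :=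
  IsIngletonOffender.of_le_of_inf_le hoff (sup_le inf_le_left inf_le_left)
    le_sup_left le_sup_right
end
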